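/- If W ∈ ℝ^{2ⁿ} is in the eigenspace of eigenvalue 1 of K^{[n]}, then for every integer t with 0 ≤ t ≤ n, the t-th derivative W_{<t>} ∈ ℝ^{2^{n−t}} is in the eigenspace of eigenvalue 1 of K^{[n−t]}. -/

import Mathlib

/-!
The weight vector `r u = ρ ^ wt u` is a tensor power of `(1, ρ)`, the eigenvector of `K` for the
eigenvalue 1 (as `1 + ρ = √2` and `1 - ρ = √2 ρ`), so `K^{[t]} r = r`. Under `(u, v) ↦ uv` the
matrix `K^{[t+m]}` is `K^{[t]} ⊗ K^{[m]}`, and contracting a fixed vector of `A ⊗ B` in its first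
factor against a fixed vector of `A` gives a fixed vector of `B`; `W_{<t>}` is that contraction.
-/

open Matrix Finset

noncomputable def Kbit : Matrix (ZMod 2) (ZMod 2) ℝ :=
  fun a b => (1 / Real.sqrt 2) * (if a = 1 ∧ b = 1 then -1 else 1)

/-- m-th Kronecker power of K = (1/√2)[[1,1],[1,-1]], indexed by F₂^m
(K^{[0]} is the 1×1 identity). -/
noncomputable def Kpow (m : ℕ) : Matrix (Fin m → ZMod 2) (Fin m → ZMod 2) ℝ :=
  fun u v => ∏ i, Kbit (u i) (v i)

noncomputable def rho : ℝ := Real.sqrt 2 - 1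

def wt {n : ℕ} (v : Fin n → ZMod 2) : ℕ := (univ.filter fun i => v i = 1).card

/-- W_{<t>}[v] = Σ_{u ∈ F₂ᵗ} ρ^{wt(u)} W[uv]. -/
noncomputable def wDeriv (t m : ℕ) (W : (Fin (t + m) → ZMod 2) → ℝ) :
    (Fin m → ZMod 2) → ℝ :=
  fun v => ∑ u : Fin t → ZMod 2, rho ^ wt u * W (Fin.append u v)

open scoped Kronecker

theorem Matrix.vecMul_contract_eq_of_kronecker {α β R : Type*} [Fintype α] [Fintype β]
    [CommSemiring R] (A : Matrix α α R) (B : Matrix β β R) (r : α → R) (hr : A *ᵥ r = r)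
    (W : α × β → R) (hW : W ᵥ* (A ⊗ₖ B) = W) :
    (fun b => ∑ a, r a * W (a, b)) ᵥ* B = fun b => ∑ a, r a * W (a, b) := by
  funext b'
  calc ((fun b => ∑ a, r a * W (a, b)) ᵥ* B) b'
      = ∑ b, ∑ a, ∑ a', A a a' * r a' * W (a, b) * B b b' := by
        conv_lhs => rw [← hr]
        simp only [vecMul, dotProduct, mulVec, Finset.sum_mul]
    _ = ∑ a', r a' * ∑ p : α × β, W p * (A ⊗ₖ B) p (a', b') := by
        simp only [kroneckerMap_apply, Fintype.sum_prod_type, Finset.mul_sum]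
        rw [Finset.sum_comm_cycle]
        refine Finset.sum_congr rfl fun a' _ => ?_
        rw [Finset.sum_comm]
        exact Finset.sum_congr rfl fun a _ => Finset.sum_congr rfl fun b _ => by ring
    _ = ∑ a, r a * W (a, b') := by
        conv_rhs => rw [← hW]
        rfl

theorem Matrix.piKronecker_mulVec_piProd {ι R : Type*} [Fintype ι] [CommSemiring R] (n : ℕ)
    (M : Matrix ι ι R) (f : ι → R) :
    (of fun u v : Fin n → ι => ∏ i, M (u i) (v i)) *ᵥ (fun v => ∏ i, f (v i)) =
      fun u => ∏ i, (M *ᵥ f) (u i) := by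
  funext u
  simp only [mulVec, dotProduct, of_apply, ← Finset.prod_mul_distrib]
  exact (Fintype.prod_sum fun i a => M (u i) a * f a).symm

theorem Kbit_mulVec_rho : Kbit *ᵥ (fun a => if a = 1 then rho else 1) =
    fun a => if a = 1 then rho else 1 := by
  have hsq : Real.sqrt 2 * Real.sqrt 2 = 2 := Real.mul_self_sqrt (by norm_num)
  funext b
  simp only [mulVec, dotProduct, show (univ : Finset (ZMod 2)) = {0, 1} from rfl,
    sum_pair zero_ne_one]
  obtain rfl | rfl : b = 0 ∨ b = 1 := by revert b; decide
  all_goals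
    simp only [Kbit, rho, one_div, true_and, false_and, zero_ne_one, ↓reduceIte, mul_one, mul_neg]
    field_simp
    linarith

theorem rho_pow_wt {n : ℕ} (u : Fin n → ZMod 2) :
    rho ^ wt u = ∏ i, if u i = 1 then rho else 1 := by
  rw [wt, ← Finset.prod_const, Finset.prod_filter]

theorem Kpow_mulVec_rho_pow_wt (n : ℕ) :
    Kpow n *ᵥ (fun u => rho ^ wt u) = fun u => rho ^ wt u := by
  simp only [rho_pow_wt]
  exact (piKronecker_mulVec_piProd n Kbit _).trans (by rw [Kbit_mulVec_rho])

theorem Kpow_add_eq_kronecker (t m : ℕ) :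
    (Kpow (t + m)).submatrix (Fin.appendEquiv t m) (Fin.appendEquiv t m) = Kpow t ⊗ₖ Kpow m := by
  ext ⟨u, v⟩ ⟨u', v'⟩
  simp [Kpow, Fin.prod_univ_add]

/-- If W ∈ ℝ^{2ⁿ} is in the eigenspace of 1 of K^{[n]} (n = t+m, so 0 ≤ t ≤ n),
then the t-th derivative W_{<t>} is in the eigenspace of 1 of K^{[n−t]}. -/
theorem stmt_14 (t m : ℕ) (W : (Fin (t + m) → ZMod 2) → ℝ)
    (hW : vecMul W (Kpow (t + m)) = W) :
    vecMul (wDeriv t m W) (Kpow m) = wDeriv t m W := by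
  have hW' : (W ∘ Fin.appendEquiv t m) ᵥ* (Kpow t ⊗ₖ Kpow m) = W ∘ Fin.appendEquiv t m := by
    rw [← Kpow_add_eq_kronecker, submatrix_vecMul_equiv, Function.comp_assoc,
      Equiv.self_comp_symm, Function.comp_id, hW]
  exact vecMul_contract_eq_of_kronecker _ _ _ (Kpow_mulVec_rho_pow_wt t) _ hW'
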